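/- Let g : [0,∞) → ℝ be continuous, convex, strictly decreasing, with g(x) ≤ −1 for all x. Suppose (y_n)_{n≥0} is a strictly increasing sequence in [0,∞) with y_0 = 0, y_n → ∞ as n → ∞, and M_{y_{n−1}, y_n} = 1 for every n ≥ 1; for n ≥ 1 let L_n : ℝ → ℝ be the affine function with L_n(y_{n−1}) = g(y_{n−1}) and L_n(y_n) = g(y_n), written L_n(x) = a_n + s_n·x. Then for every x ∈ [0,∞): ∑_{j=1}^∞ 2^{a_j}·(2^{s_j})^x ≤ 6·2^{g(x)}. -/

import Mathlib

open MeasureTheory ProbabilityTheory Filter Set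

noncomputable section

namespace Bradley

variable {Ω : Type*} [MeasurableSpace Ω]

/-- The strong mixing (α-mixing) coefficient between two sub-σ-fields. -/
def alphaMix (P : Measure Ω) (𝓐 𝓑 : MeasurableSpace Ω) : ℝ :=
  sSup {x : ℝ | ∃ A B : Set Ω, MeasurableSet[𝓐] A ∧ MeasurableSet[𝓑] B ∧
    x = |(P (A ∩ B)).toReal - (P A).toReal * (P B).toReal|}

/-- `A : Fin n → Set Ω` is a finite partition of `Ω` into `𝓐`-measurable pieces. -/
def IsFinitePartitionIn (𝓐 : MeasurableSpace Ω) {n : ℕ} (A : Fin n → Set Ω) : Prop :=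
  (∀ i, MeasurableSet[𝓐] (A i)) ∧ Pairwise (Function.onFun Disjoint A) ∧ (⋃ i, A i) = Set.univ

/-- The absolute regularity (β-mixing) coefficient between two sub-σ-fields. -/
def betaMix (P : Measure Ω) (𝓐 𝓑 : MeasurableSpace Ω) : ℝ :=
  sSup {x : ℝ | ∃ (m n : ℕ) (A : Fin m → Set Ω) (B : Fin n → Set Ω),
    IsFinitePartitionIn 𝓐 A ∧ IsFinitePartitionIn 𝓑 B ∧
    x = (1/2) * ∑ i, ∑ j, |(P (A i ∩ B j)).toReal - (P (A i)).toReal * (P (B j)).toReal|}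

/-- Covariance of two real random variables. -/
def cov {Ω : Type*} {_ : MeasurableSpace Ω} (P : Measure Ω) (Y Z : Ω → ℝ) : ℝ :=
  ∫ ω, (Y ω - ∫ a, Y a ∂P) * (Z ω - ∫ a, Z a ∂P) ∂P

/-- Correlation of two real random variables. -/
def corr {Ω : Type*} {_ : MeasurableSpace Ω} (P : Measure Ω) (Y Z : Ω → ℝ) : ℝ :=
  cov P Y Z / (Real.sqrt (variance Y P) * Real.sqrt (variance Z P))

/-- The maximal correlation (ρ-mixing) coefficient between two sub-σ-fields. -/
def rhoMix (P : Measure Ω) (𝓐 𝓑 : MeasurableSpace Ω) : ℝ :=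
  sSup {x : ℝ | ∃ Y Z : Ω → ℝ, Measurable[𝓐] Y ∧ Measurable[𝓑] Z ∧
    MemLp Y 2 P ∧ MemLp Z 2 P ∧ 0 < variance Y P ∧ 0 < variance Z P ∧
    x = |corr P Y Z|}

/-- Strict stationarity of a two-sided sequence of real random variables. -/
def StrictlyStationary (P : Measure Ω) (X : ℤ → Ω → ℝ) : Prop :=
  ∀ j : ℤ, Measure.map (fun ω (k : ℤ) => X (k + j) ω) P
    = Measure.map (fun ω (k : ℤ) => X k ω) P

/-- Reversibility: the time-reversed sequence has the same distribution. -/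
def Reversible (P : Measure Ω) (X : ℤ → Ω → ℝ) : Prop :=
  Measure.map (fun ω (k : ℤ) => X (-k) ω) P = Measure.map (fun ω (k : ℤ) => X k ω) P

/-- The σ-field generated by `X j`, `j ≤ k`. -/
def pastSigma (X : ℤ → Ω → ℝ) (k : ℤ) : MeasurableSpace Ω :=
  ⨆ j ≤ k, MeasurableSpace.comap (X j) inferInstance

/-- The σ-field generated by `X j`, `j ≥ k`. -/
def futureSigma (X : ℤ → Ω → ℝ) (k : ℤ) : MeasurableSpace Ω :=
  ⨆ (j) (_ : k ≤ j), MeasurableSpace.comap (X j) inferInstance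

/-- Conditional independence of the σ-fields `mA` and `mB` given the σ-field `m`:
for all events `A ∈ mA`, `B ∈ mB`, `E[1_{A∩B} | m] = E[1_A | m] · E[1_B | m]` a.e. -/
def CondIndepGiven (P : Measure Ω) (m mA mB : MeasurableSpace Ω) : Prop :=
  ∀ A B : Set Ω, MeasurableSet[mA] A → MeasurableSet[mB] B →
    MeasureTheory.condExp m P ((A ∩ B).indicator fun _ => (1 : ℝ))
      =ᵐ[P] fun ω => MeasureTheory.condExp m P (A.indicator fun _ => (1 : ℝ)) ω
        * MeasureTheory.condExp m P (B.indicator fun _ => (1 : ℝ)) ω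

/-- Markov property: for every `k`, past and future are conditionally
independent given `σ(X k)`. -/
def IsMarkovChain (P : Measure Ω) (X : ℤ → Ω → ℝ) : Prop :=
  ∀ k : ℤ, CondIndepGiven P (MeasurableSpace.comap (X k) inferInstance)
    (pastSigma X k) (futureSigma X k)

/-- `α_X(n)`. -/
def alphaX (P : Measure Ω) (X : ℤ → Ω → ℝ) (n : ℕ) : ℝ :=
  alphaMix P (pastSigma X 0) (futureSigma X n)

/-- `β_X(n)`. -/
def betaX (P : Measure Ω) (X : ℤ → Ω → ℝ) (n : ℕ) : ℝ :=
  betaMix P (pastSigma X 0) (futureSigma X n)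

/-- `ρ_X(n)`. -/
def rhoX (P : Measure Ω) (X : ℤ → Ω → ℝ) (n : ℕ) : ℝ :=
  rhoMix P (pastSigma X 0) (futureSigma X n)

/-- The joint-probability matrix `Λ^{(ε,θ)}`. -/
def lam (ε θ : ℝ) (i j : Fin 2) : ℝ :=
  if i = 0 then
    (if j = 0 then (1 - ε) ^ 2 + (1 - ε) * ε * θ else (1 - ε) * ε - (1 - ε) * ε * θ)
  else
    (if j = 0 then (1 - ε) * ε - (1 - ε) * ε * θ else ε ^ 2 + (1 - ε) * ε * θ)

/-- The transition-probability matrix `ℙ^{(ε,θ)}`. -/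
def pmat (ε θ : ℝ) (i j : Fin 2) : ℝ :=
  if i = 0 then
    (if j = 0 then (1 - ε) + ε * θ else ε - ε * θ)
  else
    (if j = 0 then (1 - ε) - (1 - ε) * θ else ε + (1 - ε) * θ)

/-- Slope `ζ_{v,y}` of the chord of `g` from `v` to `y`. -/
def chordSlope (g : ℝ → ℝ) (v y : ℝ) : ℝ := (g y - g v) / (y - v)

/-- The chord (affine) function `C_{v,y}` (extended to all of `ℝ`). -/
def chordLine (g : ℝ → ℝ) (v y x : ℝ) : ℝ := g v + chordSlope g v y * (x - v)

/-- `M_{v,y} := sup_{x ∈ [v,y]} (C_{v,y}(x) − g(x))`. -/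
def Mvy (g : ℝ → ℝ) (v y : ℝ) : ℝ :=
  sSup ((fun x => chordLine g v y x - g x) '' Set.Icc v y)

/-- `g(x) := x·log₂ r + log₂ f(x)`. -/
def gOf (r : ℝ) (f : ℝ → ℝ) (x : ℝ) : ℝ := x * Real.logb 2 r + Real.logb 2 (f x)

private lemma chordSlope_spec (g : ℝ → ℝ) {v w : ℝ} (hvw : v < w) :
    chordSlope g v w * (w - v) = g w - g v := by
  unfold chordSlope
  rw [div_mul_cancel₀]
  exact sub_ne_zero.mpr hvw.ne'

private lemma chordLine_eq' (g : ℝ → ℝ) {v w : ℝ} (hvw : v < w) (t : ℝ) :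
    chordLine g v w t = g w + chordSlope g v w * (t - w) := by
  have h := chordSlope_spec g hvw
  unfold chordLine
  nlinarith [h]

/-- chord lies below g to the right of the interval -/
private lemma chord_le_right {g : ℝ → ℝ} (hconv : ConvexOn ℝ (Set.Ici 0) g)
    {v w u : ℝ} (hv : 0 ≤ v) (hvw : v < w) (hwu : w ≤ u) :
    chordLine g v w u ≤ g u := by
  rcases hwu.eq_or_lt with rfl | hlt
  · rw [chordLine_eq' g hvw]; simp
  · have hw : (0:ℝ) ≤ w := hv.trans hvw.le
    have hu : (0:ℝ) ≤ u := hw.trans hwu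
    have key : chordSlope g v w ≤ chordSlope g w u :=
      hconv.slope_mono_adjacent hv hu hvw hlt
    have h2 : chordSlope g w u * (u - w) = g u - g w := chordSlope_spec g hlt
    have h3 : chordSlope g v w * (u - w) ≤ chordSlope g w u * (u - w) :=
      mul_le_mul_of_nonneg_right key (by linarith)
    rw [chordLine_eq' g hvw]
    linarith
/-- chord lies below g to the left of the interval -/
private lemma chord_le_left {g : ℝ → ℝ} (hconv : ConvexOn ℝ (Set.Ici 0) g)
    {v w u : ℝ} (hu : 0 ≤ u) (huv : u ≤ v) (hvw : v < w) :
    chordLine g v w u ≤ g u := by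
  rcases huv.eq_or_lt with rfl | hlt
  · simp [chordLine]
  · have hw : (0:ℝ) ≤ w := (hu.trans huv).trans hvw.le
    have key : chordSlope g u v ≤ chordSlope g v w :=
      hconv.slope_mono_adjacent hu hw hlt hvw
    have h2 : chordSlope g u v * (v - u) = g v - g u := chordSlope_spec g hlt
    have h3 : chordSlope g u v * (v - u) ≤ chordSlope g v w * (v - u) :=
      mul_le_mul_of_nonneg_right key (by linarith)
    unfold chordLine
    nlinarith
/-- the sup in Mvy is attained and bounds -/
private lemma Mvy_attained {g : ℝ → ℝ} (hcont : ContinuousOn g (Set.Ici 0))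
    {v w : ℝ} (hv : 0 ≤ v) (hvw : v < w) :
    ∃ p ∈ Set.Icc v w, chordLine g v w p - g p = Mvy g v w ∧
      ∀ z ∈ Set.Icc v w, chordLine g v w z - g z ≤ Mvy g v w := by
  have hsub : Set.Icc v w ⊆ Set.Ici (0:ℝ) := fun z hz => hv.trans hz.1
  have hc : ContinuousOn (fun z => chordLine g v w z - g z) (Set.Icc v w) := by
    apply ContinuousOn.sub _ (hcont.mono hsub)
    exact (continuous_const.add ((continuous_const.mul (continuous_id.sub continuous_const)))).continuousOn
  obtain ⟨p, hp, hmax⟩ := isCompact_Icc.exists_isMaxOn (Set.nonempty_Icc.mpr hvw.le) hc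
  have hbdd : BddAbove ((fun z => chordLine g v w z - g z) '' Set.Icc v w) :=
    ⟨_, by rintro _ ⟨z, hz, rfl⟩; exact hmax hz⟩
  have heq : Mvy g v w = chordLine g v w p - g p := by
    apply le_antisymm
    · exact csSup_le ((Set.nonempty_Icc.mpr hvw.le).image _)
        (by rintro _ ⟨z, hz, rfl⟩; exact hmax hz)
    · exact le_csSup hbdd (Set.mem_image_of_mem _ hp)
  exact ⟨p, hp, heq.symm, fun z hz => le_csSup hbdd (Set.mem_image_of_mem _ hz) |>.trans_eq rfl⟩


set_option linter.unusedVariables false in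
theorem statement_18 (g : ℝ → ℝ)
    (hcont : ContinuousOn g (Set.Ici 0)) (hconv : ConvexOn ℝ (Set.Ici 0) g)
    (hanti : StrictAntiOn g (Set.Ici 0)) (hneg : ∀ x ∈ Set.Ici (0 : ℝ), g x ≤ -1)
    (y : ℕ → ℝ) (hy0 : y 0 = 0) (hpos : ∀ n, 0 ≤ y n) (hmono : StrictMono y)
    (hM : ∀ n : ℕ, 1 ≤ n → Mvy g (y (n - 1)) (y n) = 1)
    (hytop : Tendsto y atTop atTop) :
    ∀ x ∈ Set.Ici (0 : ℝ),
      (∑' j : ℕ, ENNReal.ofReal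
          ((2 : ℝ) ^ chordLine g (y j) (y (j + 1)) 0 *
            ((2 : ℝ) ^ chordSlope g (y j) (y (j + 1))) ^ x))
        ≤ ENNReal.ofReal (6 * (2 : ℝ) ^ g x) := by
  intro x hx
  classical
  have hx0 : (0:ℝ) ≤ x := hx
  -- basic facts about y
  have hylt : ∀ n, y n < y (n + 1) := fun n => hmono (Nat.lt_succ_self n)
  -- bound and attainment from hM
  have hMn : ∀ n : ℕ, Mvy g (y n) (y (n+1)) = 1 := by
    intro n
    have := hM (n+1) (by omega)
    simpa using this
  have hBound : ∀ n : ℕ, ∀ z ∈ Set.Icc (y n) (y (n+1)),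
      chordLine g (y n) (y (n+1)) z ≤ g z + 1 := by
    intro n z hz
    obtain ⟨p, hp, _, hb⟩ := Mvy_attained hcont (hpos n) (hylt n)
    have := hb z hz
    rw [hMn n] at this
    linarith
  have hAtt : ∀ n : ℕ, ∃ p ∈ Set.Icc (y n) (y (n+1)),
      chordLine g (y n) (y (n+1)) p - g p = 1 := by
    intro n
    obtain ⟨p, hp, he, _⟩ := Mvy_attained hcont (hpos n) (hylt n)
    exact ⟨p, hp, by rw [he, hMn n]⟩
  -- slope monotonicity
  have hslope : ∀ n : ℕ, chordSlope g (y n) (y (n+1)) ≤ chordSlope g (y (n+1)) (y (n+2)) :=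
    fun n => hconv.slope_mono_adjacent (hpos n) (hpos (n+2)) (hylt n) (hylt (n+1))
  -- difference of consecutive chords
  have hdiff : ∀ n : ℕ, ∀ t : ℝ,
      chordLine g (y (n+1)) (y (n+2)) t - chordLine g (y n) (y (n+1)) t
        = (chordSlope g (y (n+1)) (y (n+2)) - chordSlope g (y n) (y (n+1))) * (t - y (n+1)) := by
    intro n t
    rw [chordLine_eq' g (hylt n)]
    unfold chordLine
    ring
  -- gap lemma (right): for u ≥ y (n+2)
  have hGapR : ∀ n : ℕ, ∀ u : ℝ, y (n+2) ≤ u →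
      chordLine g (y n) (y (n+1)) u + 1 ≤ chordLine g (y (n+1)) (y (n+2)) u := by
    intro n u hu
    obtain ⟨p, hp, hpe⟩ := hAtt (n+1)
    have h1 : chordLine g (y n) (y (n+1)) p ≤ g p :=
      chord_le_right hconv (hpos n) (hylt n) hp.1
    have hDp : 1 ≤ (chordSlope g (y (n+1)) (y (n+2)) - chordSlope g (y n) (y (n+1))) * (p - y (n+1)) := by
      rw [← hdiff n p]; linarith
    have hDu := hdiff n u
    have hup : p ≤ u := hp.2.trans hu
    nlinarith [mul_nonneg (sub_nonneg.mpr (hslope n)) (sub_nonneg.mpr hup)]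
  -- gap lemma (left): for u ≤ y n
  have hGapL : ∀ n : ℕ, ∀ u : ℝ, 0 ≤ u → u ≤ y n →
      chordLine g (y (n+1)) (y (n+2)) u + 1 ≤ chordLine g (y n) (y (n+1)) u := by
    intro n u hu0 hu
    obtain ⟨p, hp, hpe⟩ := hAtt n
    have h1 : chordLine g (y (n+1)) (y (n+2)) p ≤ g p := by
      apply chord_le_left hconv _ hp.2 (hylt (n+1))
      exact (hpos n).trans hp.1
    have hDp : (chordSlope g (y (n+1)) (y (n+2)) - chordSlope g (y n) (y (n+1))) * (p - y (n+1)) ≤ -1 := by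
      rw [← hdiff n p]; linarith
    have hDu := hdiff n u
    have hup : u ≤ p := hu.trans hp.1
    nlinarith [mul_nonneg (sub_nonneg.mpr (hslope n)) (sub_nonneg.mpr hup)]
  -- find index m with y m ≤ x < y (m+1)
  have hex : ∃ n, x < y (n+1) := by
    obtain ⟨N, hN⟩ := (hytop.eventually_gt_atTop x).exists
    exact ⟨N, lt_of_lt_of_le hN (hmono.monotone (Nat.le_succ N))⟩
  set m := Nat.find hex with hmdef
  have hxm1 : x < y (m+1) := Nat.find_spec hex
  have hxm : y m ≤ x := by
    rcases Nat.eq_zero_or_pos m with h0 | h0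
    · rw [h0, hy0]; exact hx0
    · obtain ⟨k, hk⟩ := Nat.exists_eq_add_of_lt h0
      have hmin := Nat.find_min hex (show k < m by omega)
      rw [show m = k + 1 by omega]
      exact not_lt.mp hmin
  -- left chain
  have hLeft : ∀ d j : ℕ, j + 1 + d = m →
      chordLine g (y j) (y (j+1)) x ≤ g x - d := by
    intro d
    induction d with
    | zero =>
      intro j hj
      have : y (j+1) ≤ x := by rw [show j + 1 = m by omega]; exact hxm
      simpa using chord_le_right hconv (hpos j) (hylt j) this
    | succ d ih =>
      intro j hj
      have h1 : y (j+2) ≤ x := le_trans (hmono.monotone (show j+2 ≤ m by omega)) hxm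
      have h2 := hGapR j x h1
      have h3 := ih (j+1) (by omega)
      push_cast
      push_cast at h3
      linarith
  -- right chain
  have hRight : ∀ d : ℕ,
      chordLine g (y (m+1+d)) (y (m+1+d+1)) x ≤ g x - d := by
    intro d
    induction d with
    | zero =>
      have : x ≤ y (m+1) := hxm1.le
      simpa using chord_le_left hconv hx0 this (hylt (m+1))
    | succ d ih =>
      have h1 : x ≤ y (m+1+d) := hxm1.le.trans (hmono.monotone (by omega))
      have h2 := hGapL (m+1+d) x hx0 h1
      rw [show m+1+d+2 = m+1+d+1+1 by omega] at h2
      rw [show m+1+(d+1) = m+1+d+1 by omega]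
      push_cast
      push_cast at ih
      linarith
  -- distance function
  set δ : ℕ → ℕ := fun j => ((j:ℤ) - m).natAbs with hδdef
  -- per-term exponent bound
  have hterm : ∀ j : ℕ, chordLine g (y j) (y (j+1)) x ≤ g x + 1 - δ j := by
    intro j
    rcases lt_trichotomy j m with hj | heq | hj
    · have hd : j + 1 + (m - 1 - j) = m := by omega
      have := hLeft (m-1-j) j hd
      have hδ : (δ j : ℝ) = (m - 1 - j : ℕ) + 1 := by
        have : δ j = (m - 1 - j) + 1 := by simp only [hδdef]; omega
        rw [this]; push_cast; ring
      rw [hδ]; linarith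
    · have hδ : δ j = 0 := by simp only [hδdef]; omega
      have hb := hBound j x (by rw [heq]; exact ⟨hxm, hxm1.le⟩)
      rw [hδ]; push_cast; linarith
    · have hd : j = m + 1 + (j - m - 1) := by omega
      have := hRight (j - m - 1)
      rw [← hd] at this
      have hδ : (δ j : ℝ) = (j - m - 1 : ℕ) + 1 := by
        have : δ j = (j - m - 1) + 1 := by simp only [hδdef]; omega
        rw [this]; push_cast; ring
      rw [hδ]; linarith
  -- rewrite each summand as a single rpow
  have hsummand : ∀ j : ℕ,
      (2 : ℝ) ^ chordLine g (y j) (y (j + 1)) 0 *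
        ((2 : ℝ) ^ chordSlope g (y j) (y (j + 1))) ^ x
      = (2 : ℝ) ^ chordLine g (y j) (y (j+1)) x := by
    intro j
    rw [← Real.rpow_mul (by norm_num), ← Real.rpow_add (by norm_num)]
    congr 1
    unfold chordLine
    ring
  -- real per-term bound
  have hreal : ∀ j : ℕ, (2 : ℝ) ^ chordLine g (y j) (y (j+1)) x
      ≤ (2:ℝ) ^ g x * (2 * (1/2:ℝ) ^ δ j) := by
    intro j
    have h1 : (2:ℝ) ^ chordLine g (y j) (y (j+1)) x ≤ (2:ℝ) ^ (g x + 1 - δ j) :=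
      Real.rpow_le_rpow_of_exponent_le one_le_two (hterm j)
    have h2 : (2:ℝ) ^ (g x + 1 - δ j) = (2:ℝ) ^ g x * (2 * (1/2:ℝ) ^ δ j) := by
      rw [show g x + 1 - (δ j : ℝ) = g x + 1 + (-(δ j:ℝ)) by ring,
        Real.rpow_add (by norm_num), Real.rpow_add (by norm_num), Real.rpow_one,
        Real.rpow_neg (by norm_num), Real.rpow_natCast, one_div, inv_pow]
      ring
    linarith [h1, h2.le]
  -- ENNReal per-term bound
  have hEterm : ∀ j : ℕ,
      ENNReal.ofReal ((2 : ℝ) ^ chordLine g (y j) (y (j + 1)) 0 *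
          ((2 : ℝ) ^ chordSlope g (y j) (y (j + 1))) ^ x)
      ≤ ENNReal.ofReal ((2:ℝ) ^ g x) * (2 * (2⁻¹ : ENNReal) ^ δ j) := by
    intro j
    rw [hsummand j]
    refine le_trans (ENNReal.ofReal_le_ofReal (hreal j)) ?_
    rw [ENNReal.ofReal_mul (Real.rpow_nonneg (by norm_num) _)]
    gcongr
    rw [ENNReal.ofReal_mul (by norm_num), ENNReal.ofReal_pow (by norm_num)]
    have hhalf : ENNReal.ofReal (1/2 : ℝ) = (2⁻¹ : ENNReal) := by
      rw [one_div, ENNReal.ofReal_inv_of_pos (by norm_num)]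
      norm_num
    rw [hhalf]
    gcongr
    simp [ENNReal.ofReal_ofNat]
  -- geometric sum bound
  have hS : (∑' j : ℕ, (2⁻¹ : ENNReal) ^ δ j) ≤ 3 := by
    rw [← Summable.sum_add_tsum_nat_add' (f := fun j => (2⁻¹ : ENNReal) ^ δ j) (k := m+1) ENNReal.summable]
    have htail : (∑' i : ℕ, (2⁻¹ : ENNReal) ^ δ (i + (m+1))) = 1 := by
      have : ∀ i : ℕ, δ (i + (m+1)) = i + 1 := by intro i; simp only [hδdef]; omega
      simp only [this, pow_succ]
      rw [ENNReal.tsum_mul_right, ENNReal.tsum_geometric, ENNReal.one_sub_inv_two, inv_inv]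
      exact ENNReal.mul_inv_cancel (by norm_num) ENNReal.ofNat_ne_top
    have hhead : (∑ i ∈ Finset.range (m+1), (2⁻¹ : ENNReal) ^ δ i) ≤ 2 := by
      have h1 : ∀ i ∈ Finset.range (m+1), (2⁻¹ : ENNReal) ^ δ i = (2⁻¹ : ENNReal) ^ (m - i) := by
        intro i hi
        simp only [Finset.mem_range] at hi
        congr 1
        simp only [hδdef]; omega
      rw [Finset.sum_congr rfl h1]
      have h2 : ∑ i ∈ Finset.range (m+1), (2⁻¹ : ENNReal) ^ (m - i)
          = ∑ i ∈ Finset.range (m+1), (2⁻¹ : ENNReal) ^ i := by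
        rw [← Finset.sum_range_reflect]
        apply Finset.sum_congr rfl
        intro i hi
        simp only [Finset.mem_range] at hi
        congr 1
        omega
      rw [h2]
      calc ∑ i ∈ Finset.range (m+1), (2⁻¹ : ENNReal) ^ i
          ≤ ∑' i : ℕ, (2⁻¹ : ENNReal) ^ i := ENNReal.sum_le_tsum _
        _ = 2 := by rw [ENNReal.tsum_geometric, ENNReal.one_sub_inv_two, inv_inv]
    calc (∑ i ∈ Finset.range (m+1), (2⁻¹ : ENNReal) ^ δ i) + ∑' i : ℕ, (2⁻¹ : ENNReal) ^ δ (i + (m+1))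
        ≤ 2 + 1 := by rw [htail]; exact add_le_add_left hhead 1
      _ = 3 := by norm_num
  -- put it together
  calc (∑' j : ℕ, ENNReal.ofReal
          ((2 : ℝ) ^ chordLine g (y j) (y (j + 1)) 0 *
            ((2 : ℝ) ^ chordSlope g (y j) (y (j + 1))) ^ x))
      ≤ ∑' j : ℕ, ENNReal.ofReal ((2:ℝ) ^ g x) * (2 * (2⁻¹ : ENNReal) ^ δ j) :=
        ENNReal.tsum_le_tsum hEterm
    _ = ENNReal.ofReal ((2:ℝ) ^ g x) * (2 * ∑' j : ℕ, (2⁻¹ : ENNReal) ^ δ j) := by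
        rw [ENNReal.tsum_mul_left, ENNReal.tsum_mul_left]
    _ ≤ ENNReal.ofReal ((2:ℝ) ^ g x) * (2 * 3) := by gcongr
    _ = ENNReal.ofReal (6 * (2 : ℝ) ^ g x) := by
        rw [ENNReal.ofReal_mul (by norm_num)]
        rw [show ENNReal.ofReal (6:ℝ) = 6 by norm_num]
        ring


end Bradley
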